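/- arXiv:1206.5123 — 5 statements merged into one kernel-verified Lean document; each statement's English description precedes it below -/
import Mathlib

section
/- Let a_1 < b_1 < a_2 < b_2 < ... < a_k < b_k be real numbers. Then for every complex number z with strictly positive imaginary part, the imaginary part of the product ∏_{i=1}^k (z - b_i)/(z - a_i) is nonzero. -/
/-!
Write `φ x = arg (z - x)`. For `z` in the upper half plane, `φ` is strictly increasing with values
in `(0, π)`, so the angles `φ (b i) - φ (a i)` of the factors are positive and, by interlacing,
their sum `S` telescopes to at most `φ (b last) - φ (a first) < π`. The argument of the product
agrees with `S` modulo `2π`, hence equals `S ∈ (0, π)`, and the product lies in the upper half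
plane.
-/

open Complex Real Set

namespace Complex

theorem im_pos_iff_arg_mem_Ioo {w : ℂ} : 0 < w.im ↔ arg w ∈ Ioo 0 π := by
  constructor
  · intro hw
    have hne : w ≠ 0 := fun h => by simp [h] at hw
    have hsin : 0 < Real.sin (arg w) := by rw [sin_arg]; exact div_pos hw (norm_pos_iff.2 hne)
    refine ⟨lt_of_le_of_ne (arg_nonneg_iff.2 hw.le) ?_, lt_of_le_of_ne (arg_le_pi w) ?_⟩
    · rintro h; rw [← h, Real.sin_zero] at hsin; exact hsin.false
    · rintro h; rw [h, Real.sin_pi] at hsin; exact hsin.false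
  · intro hw
    have hsin : 0 < w.im / ‖w‖ := sin_arg w ▸ Real.sin_pos_of_pos_of_lt_pi hw.1 hw.2
    exact ((div_pos_iff.1 hsin).resolve_right fun h => (norm_nonneg w).not_gt h.2).1

theorem arg_eq_of_coe_angle_eq {w : ℂ} {θ : ℝ} (h : (arg w : Real.Angle) = θ)
    (hθ : θ ∈ Ioc (-π) π) : arg w = θ := by
  rw [arg_coe_angle_eq_iff_eq_toReal.1 h, Real.Angle.toReal_coe_eq_self_iff_mem_Ioc.2 hθ]

theorem arg_prod_coe_angle {ι : Type*} (s : Finset ι) (f : ι → ℂ) (hf : ∀ i ∈ s, f i ≠ 0) :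
    (arg (∏ i ∈ s, f i) : Real.Angle) = ∑ i ∈ s, (arg (f i) : Real.Angle) := by
  induction s using Finset.cons_induction with
  | empty => simp
  | cons j s hjs ih =>
    rw [Finset.forall_mem_cons] at hf
    rw [Finset.prod_cons, Finset.sum_cons, arg_mul_coe_angle hf.1
      (Finset.prod_ne_zero_iff.2 hf.2), ih hf.2]

theorem im_div_sub_ofReal {z : ℂ} (x y : ℝ) :
    ((z - y) / (z - x)).im = z.im * (y - x) / normSq (z - x) := by
  simp only [div_im, sub_im, sub_re, ofReal_im, ofReal_re, sub_zero]
  ring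

theorem sub_ofReal_ne_zero {z : ℂ} (hz : 0 < z.im) (x : ℝ) : z - x ≠ 0 := fun h => by
  simpa [h] using (show 0 < (z - x).im by simpa using hz)

theorem arg_sub_ofReal_mem_Ioo {z : ℂ} (hz : 0 < z.im) (x : ℝ) : arg (z - x) ∈ Ioo 0 π :=
  im_pos_iff_arg_mem_Ioo.1 (by simpa using hz)

theorem strictMono_arg_sub_ofReal {z : ℂ} (hz : 0 < z.im) :
    StrictMono fun x : ℝ => arg (z - x) := by
  intro x y hxy
  have hne := sub_ofReal_ne_zero hz
  have hx := arg_sub_ofReal_mem_Ioo hz x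
  have hy := arg_sub_ofReal_mem_Ioo hz y
  have hratio : 0 < ((z - y) / (z - x)).im := by
    rw [im_div_sub_ofReal]
    exact div_pos (mul_pos hz (sub_pos.2 hxy)) (normSq_pos.2 (hne x))
  have hdiff : arg ((z - y) / (z - x)) = arg (z - y) - arg (z - x) :=
    arg_eq_of_coe_angle_eq (by rw [arg_div_coe_angle (hne y) (hne x), Real.Angle.coe_sub])
      ⟨by linarith [hx.2, hy.1], by linarith [hx.1, hy.2]⟩
  show arg (z - x) < arg (z - y)
  linarith [(im_pos_iff_arg_mem_Ioo.1 hratio).1]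

end Complex

theorem sum_sub_le_of_interlacing {φ : ℝ → ℝ} (hφ : Monotone φ) {k : ℕ} (a b : Fin k → ℝ)
    (hab : ∀ i, a i ≤ b i) (hba : ∀ i j, i < j → b i ≤ a j) {lo hi : ℝ}
    (hlo : ∀ i, lo ≤ a i) (hhi : ∀ i, b i ≤ hi) (hlohi : lo ≤ hi) :
    ∑ i, (φ (b i) - φ (a i)) ≤ φ hi - φ lo := by
  induction k generalizing lo with
  | zero => simpa using hφ hlohi
  | succ k ih =>
    rw [Fin.sum_univ_succ]
    have hrest := ih (fun i => a i.succ) (fun i => b i.succ) (fun i => hab _)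
      (fun i j hij => hba _ _ (Fin.succ_lt_succ_iff.2 hij))
      (fun i => hba _ _ (Fin.succ_pos i)) (fun i => hhi _) (hhi 0)
    linarith [hφ (hlo 0)]

/-- For interlacing reals `a 0 < b 0 < a 1 < b 1 < … < a (k-1) < b (k-1)` and `z` in the open
upper half plane, the imaginary part of `∏ i, (z - b i)/(z - a i)` is nonzero. -/
theorem stmt0 (k : ℕ) (hk : 0 < k) (a b : Fin k → ℝ)
    (hab : ∀ i, a i < b i) (hba : ∀ i j : Fin k, i < j → b i < a j)
    (z : ℂ) (hz : 0 < z.im) :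
    (∏ i, (z - (b i : ℂ)) / (z - (a i : ℂ))).im ≠ 0 := by
  set φ : ℝ → ℝ := fun x => arg (z - x)
  have hφ := strictMono_arg_sub_ofReal hz
  have hφ_mem := arg_sub_ofReal_mem_Ioo hz
  have hne := sub_ofReal_ne_zero hz
  set S := ∑ i, (φ (b i) - φ (a i))
  have hS_pos : 0 < S :=
    haveI : Nonempty (Fin k) := ⟨⟨0, hk⟩⟩
    Finset.sum_pos (fun i _ => sub_pos.2 (hφ (hab i))) Finset.univ_nonempty
  have hS_lt : S < π := by
    let first : Fin k := ⟨0, hk⟩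
    let last : Fin k := ⟨k - 1, by omega⟩
    have ha : StrictMono a := fun i j h => (hab i).trans (hba i j h)
    have hb : StrictMono b := fun i j h => (hba i j h).trans (hab j)
    have := sum_sub_le_of_interlacing hφ.monotone a b (fun i => (hab i).le)
      (fun i j hij => (hba i j hij).le) (lo := a first) (hi := b last)
      (fun i => ha.monotone (Nat.zero_le i)) (fun i => hb.monotone (Nat.le_sub_one_of_lt i.isLt))
      ((hab first).le.trans (hb.monotone (Nat.zero_le _)))
    linarith [(hφ_mem (b last)).2, (hφ_mem (a first)).1]
  have harg : arg (∏ i, (z - b i) / (z - a i)) = S := by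
    refine arg_eq_of_coe_angle_eq ?_ ⟨by linarith [pi_pos], hS_lt.le⟩
    rw [arg_prod_coe_angle _ _ fun i _ => div_ne_zero (hne _) (hne _)]
    simp only [arg_div_coe_angle (hne _) (hne _), ← Real.Angle.coe_sub]
    exact (map_sum Real.Angle.coeHom _ _).symm
  exact (im_pos_iff_arg_mem_Ioo.2 (harg ▸ ⟨hS_pos, hS_lt⟩)).ne'
end

section
/- For complex numbers w₁, w₂ in the open upper half plane with w₁ ≠ w₂, the iterated integral (1/(2πi)²) ∫_{conj(w₁)}^{w₁} ∫_{conj(w₂)}^{w₂} dζ₁ dζ₂ / (ζ₁ - ζ₂)² equals -(1/(4π²)) · log( ((w₁ - w₂)(conj(w₁) - conj(w₂))) / ((w₁ - conj(w₂))(conj(w₁) - w₂)) ), which equals (1/π) · G(w₁, w₂), where G(z, w) = -(1/(2π)) log |(z - w)/(z - conj(w))| is the Green function of the Laplacian on the upper half plane with Dirichlet boundary conditions. -/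
/-!
In `ζ₂` the integrand has the primitive `-1/(ζ₁ - ζ₂)`, leaving a difference of two simple
poles to integrate in `ζ₁`. Along the vertical segments `Re (ζ₁ - p) = Re w₁ - Re w₂ =: r ≠ 0`
for both poles `p = w₂, conj w₂`, so `log (r * (ζ₁ - p))` is a primitive that never meets the
branch cut. The four resulting logarithms come in conjugate pairs, which sum to
`2 log |w₁ - w₂| - 2 log |w₁ - conj w₂|`; this is also the logarithm of the cross ratio,
the positive real `|w₁ - w₂|² / |w₁ - conj w₂|²`.
-/

open Complex intervalIntegral ComplexConjugate Set

lemma integral_div_sub_segment_sq {z a b : ℂ}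
    (h : ∀ t ∈ uIcc (0 : ℝ) 1, z - (a + t * (b - a)) ≠ 0) :
    ∫ t in (0 : ℝ)..1, (b - a) / (z - (a + t * (b - a))) ^ 2 = (z - b)⁻¹ - (z - a)⁻¹ := by
  have hderiv : ∀ t ∈ uIcc (0 : ℝ) 1, HasDerivAt (fun t : ℝ => (z - (a + t * (b - a)))⁻¹)
      ((b - a) / (z - (a + t * (b - a))) ^ 2) t := by
    intro t ht
    have hlin : HasDerivAt (fun t : ℝ => z - (a + t * (b - a))) (-(b - a)) t := by
      simpa using ((hasDerivAt_id (t : ℂ)).comp_ofReal.mul_const (b - a)).const_add a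
        |>.const_sub z
    refine ((hasDerivAt_inv (h t ht)).comp t hlin).congr_deriv ?_
    ring
  have hcont : ContinuousOn (fun t : ℝ => (b - a) / (z - (a + t * (b - a))) ^ 2) (uIcc 0 1) :=
    continuousOn_const.div (by fun_prop) fun t ht => pow_ne_zero 2 (h t ht)
  rw [integral_eq_sub_of_hasDerivAt hderiv hcont.intervalIntegrable]
  simp

lemma intervalIntegrable_div_segment_sub {a b p : ℂ}
    (h : ∀ s ∈ uIcc (0 : ℝ) 1, a + s * (b - a) - p ≠ 0) :
    IntervalIntegrable (fun s : ℝ => (b - a) / (a + s * (b - a) - p)) MeasureTheory.volume 0 1 :=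
  (continuousOn_const.div (by fun_prop) h).intervalIntegrable

lemma integral_div_segment_sub {a b p u : ℂ}
    (h : ∀ s ∈ uIcc (0 : ℝ) 1, u * (a + s * (b - a) - p) ∈ slitPlane) :
    ∫ s in (0 : ℝ)..1, (b - a) / (a + s * (b - a) - p) = log (u * (b - p)) - log (u * (a - p)) := by
  have hne : ∀ s ∈ uIcc (0 : ℝ) 1, u ≠ 0 ∧ a + s * (b - a) - p ≠ 0 := fun s hs =>
    mul_ne_zero_iff.mp (slitPlane_ne_zero (h s hs))
  have hderiv : ∀ s ∈ uIcc (0 : ℝ) 1, HasDerivAt (fun s : ℝ => log (u * (a + s * (b - a) - p)))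
      ((b - a) / (a + s * (b - a) - p)) s := by
    intro s hs
    have hlin : HasDerivAt (fun s : ℝ => u * (a + s * (b - a) - p)) (u * (b - a)) s := by
      simpa using (((hasDerivAt_id (s : ℂ)).comp_ofReal.mul_const (b - a)).const_add a
        |>.sub_const p).const_mul u
    refine (hlin.clog_real (h s hs)).congr_deriv ?_
    field_simp [(hne s hs).1]
  rw [integral_eq_sub_of_hasDerivAt hderiv
    (intervalIntegrable_div_segment_sub fun s hs => (hne s hs).2)]
  simp

lemma ofReal_re_mul_mem_slitPlane {z : ℂ} (hz : z.re ≠ 0) : (z.re : ℂ) * z ∈ slitPlane :=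
  Or.inl (by rw [re_ofReal_mul]; exact mul_self_pos.mpr hz)

lemma log_add_log_conj {z : ℂ} (hz : z ∈ slitPlane) : log z + log (conj z) = 2 * Real.log ‖z‖ := by
  rw [log_conj z (mem_slitPlane_iff_arg.mp hz).1, add_conj, log_re]
  push_cast
  ring

lemma log_mul_conj_div_mul_conj (x y : ℂ) :
    log (x * conj x / (y * conj y)) = 2 * Real.log ‖x / y‖ := by
  rw [mul_conj', mul_conj', ← div_pow, ← ofReal_div, ← norm_div, ← ofReal_pow,
    ← ofReal_log (by positivity), Real.log_pow]
  push_cast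
  ring

lemma log_mul_add_log_mul_conj_sub {r : ℝ} {x y : ℂ} (hx : r * x ∈ slitPlane)
    (hy : r * y ∈ slitPlane) :
    log (r * x) + log (r * conj x) - (log (r * y) + log (r * conj y)) = 2 * Real.log ‖x / y‖ := by
  have hconj (v : ℂ) : (r : ℂ) * conj v = conj (r * v) := by rw [map_mul, conj_ofReal]
  have hrx := slitPlane_ne_zero hx
  rw [hconj, hconj, log_add_log_conj hx, log_add_log_conj hy,
    ← mul_div_mul_left x y (left_ne_zero_of_mul hrx), norm_div,
    Real.log_div (norm_ne_zero_iff.mpr hrx) (norm_ne_zero_iff.mpr (slitPlane_ne_zero hy))]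
  push_cast
  ring

lemma re_conj_add_mul_sub_conj (w : ℂ) (s : ℝ) : (conj w + s * (w - conj w)).re = w.re := by
  simp

lemma integral_inv_sub_inv_vertical_segment {w₁ w₂ : ℂ} (hre : w₁.re ≠ w₂.re) :
    ∫ s in (0 : ℝ)..1, (w₁ - conj w₁) * ((conj w₁ + s * (w₁ - conj w₁) - w₂)⁻¹ -
      (conj w₁ + s * (w₁ - conj w₁) - conj w₂)⁻¹) = 2 * Real.log ‖(w₁ - w₂) / (w₁ - conj w₂)‖ := by
  have hmem (z : ℂ) (hz : z.re = w₁.re - w₂.re) : ((w₁.re - w₂.re : ℝ) : ℂ) * z ∈ slitPlane :=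
    hz ▸ ofReal_re_mul_mem_slitPlane (hz ▸ sub_ne_zero.mpr hre)
  have hseg (p : ℂ) (hp : p.re = w₂.re) (s : ℝ) (_ : s ∈ uIcc (0 : ℝ) 1) :
      ((w₁.re - w₂.re : ℝ) : ℂ) * (conj w₁ + s * (w₁ - conj w₁) - p) ∈ slitPlane :=
    hmem _ (by rw [sub_re, re_conj_add_mul_sub_conj, hp])
  have hint (p : ℂ) (hp : p.re = w₂.re) := intervalIntegrable_div_segment_sub
    fun s hs => right_ne_zero_of_mul (slitPlane_ne_zero (hseg p hp s hs))
  simp only [mul_sub (w₁ - conj w₁), ← div_eq_mul_inv]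
  rw [integral_sub (hint w₂ rfl) (hint (conj w₂) (conj_re w₂)),
    integral_div_segment_sub (hseg w₂ rfl),
    integral_div_segment_sub (hseg (conj w₂) (conj_re w₂)),
    ← log_mul_add_log_mul_conj_sub (hmem (w₁ - w₂) (sub_re _ _))
      (hmem (w₁ - conj w₂) (by rw [sub_re, conj_re])), map_sub, map_sub, conj_conj]
  ring

lemma integral_integral_div_sub_vertical_segments_sq {w₁ w₂ : ℂ} (hre : w₁.re ≠ w₂.re) :
    ∫ s in (0 : ℝ)..1, ∫ t in (0 : ℝ)..1, ((w₁ - conj w₁) * (w₂ - conj w₂)) /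
      ((conj w₁ + s * (w₁ - conj w₁)) - (conj w₂ + t * (w₂ - conj w₂))) ^ 2 =
      2 * Real.log ‖(w₁ - w₂) / (w₁ - conj w₂)‖ := by
  rw [← integral_inv_sub_inv_vertical_segment hre]
  refine integral_congr fun s _ => ?_
  simp only [mul_div_assoc]
  rw [integral_const_mul, integral_div_sub_segment_sq fun t _ h => hre ?_]
  simpa [sub_eq_zero] using congrArg re h

theorem stmt3_general (w₁ w₂ : ℂ) (hre : w₁.re ≠ w₂.re) :
    (1 / (2 * (Real.pi : ℂ) * Complex.I)) ^ 2 *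
        (∫ s in (0:ℝ)..1, ∫ t in (0:ℝ)..1,
          ((w₁ - (starRingEnd ℂ) w₁) * (w₂ - (starRingEnd ℂ) w₂)) /
            ((((starRingEnd ℂ) w₁ + (s : ℂ) * (w₁ - (starRingEnd ℂ) w₁)) -
              ((starRingEnd ℂ) w₂ + (t : ℂ) * (w₂ - (starRingEnd ℂ) w₂))) ^ 2)) =
      -(1 / (4 * (Real.pi : ℂ) ^ 2)) *
        Complex.log (((w₁ - w₂) * ((starRingEnd ℂ) w₁ - (starRingEnd ℂ) w₂)) /
          ((w₁ - (starRingEnd ℂ) w₂) * ((starRingEnd ℂ) w₁ - w₂))) ∧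
    -(1 / (4 * (Real.pi : ℂ) ^ 2)) *
        Complex.log (((w₁ - w₂) * ((starRingEnd ℂ) w₁ - (starRingEnd ℂ) w₂)) /
          ((w₁ - (starRingEnd ℂ) w₂) * ((starRingEnd ℂ) w₁ - w₂))) =
      Complex.ofReal ((1 / Real.pi) *
        (-(1 / (2 * Real.pi)) *
          Real.log ‖(w₁ - w₂) / (w₁ - (starRingEnd ℂ) w₂)‖)) := by
  have hcross : log ((w₁ - w₂) * (conj w₁ - conj w₂) / ((w₁ - conj w₂) * (conj w₁ - w₂))) =
      2 * Real.log ‖(w₁ - w₂) / (w₁ - conj w₂)‖ := by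
    simpa only [map_sub, conj_conj] using log_mul_conj_div_mul_conj (w₁ - w₂) (w₁ - conj w₂)
  have hI : (1 / (2 * (Real.pi : ℂ) * I)) ^ 2 = -(1 / (4 * (Real.pi : ℂ) ^ 2)) := by
    rw [div_pow, mul_pow, mul_pow, I_sq]
    ring
  refine ⟨by rw [integral_integral_div_sub_vertical_segments_sq hre, hcross, hI], ?_⟩
  rw [hcross]
  push_cast
  ring

/-- For distinct `w₁, w₂` in the open upper half plane (with paths chosen as the vertical
segments from `conj wⱼ` to `wⱼ`, which avoid the singularity since `Re w₁ ≠ Re w₂`), the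
iterated integral `(1/(2πi))² ∫_{conj w₁}^{w₁} ∫_{conj w₂}^{w₂} dζ₁ dζ₂ /(ζ₁-ζ₂)²` equals
`-(1/(4π²)) log( ((w₁-w₂)(conj w₁-conj w₂)) / ((w₁-conj w₂)(conj w₁-w₂)) )`, which equals
`(1/π) G(w₁,w₂)` with `G(z,w) = -(1/(2π)) log |(z-w)/(z-conj w)|` the half-plane Green
function. -/
theorem stmt3 (w₁ w₂ : ℂ) (h₁ : 0 < w₁.im) (h₂ : 0 < w₂.im) (hne : w₁ ≠ w₂)
    (hre : w₁.re ≠ w₂.re) :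
    (1 / (2 * (Real.pi : ℂ) * Complex.I)) ^ 2 *
        (∫ s in (0:ℝ)..1, ∫ t in (0:ℝ)..1,
          ((w₁ - (starRingEnd ℂ) w₁) * (w₂ - (starRingEnd ℂ) w₂)) /
            ((((starRingEnd ℂ) w₁ + (s : ℂ) * (w₁ - (starRingEnd ℂ) w₁)) -
              ((starRingEnd ℂ) w₂ + (t : ℂ) * (w₂ - (starRingEnd ℂ) w₂))) ^ 2)) =
      -(1 / (4 * (Real.pi : ℂ) ^ 2)) *
        Complex.log (((w₁ - w₂) * ((starRingEnd ℂ) w₁ - (starRingEnd ℂ) w₂)) /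
          ((w₁ - (starRingEnd ℂ) w₂) * ((starRingEnd ℂ) w₁ - w₂))) ∧
    -(1 / (4 * (Real.pi : ℂ) ^ 2)) *
        Complex.log (((w₁ - w₂) * ((starRingEnd ℂ) w₁ - (starRingEnd ℂ) w₂)) /
          ((w₁ - (starRingEnd ℂ) w₂) * ((starRingEnd ℂ) w₁ - w₂))) =
      Complex.ofReal ((1 / Real.pi) *
        (-(1 / (2 * Real.pi)) *
          Real.log ‖(w₁ - w₂) / (w₁ - (starRingEnd ℂ) w₂)‖)) :=
  stmt3_general w₁ w₂ hre
end

section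
/- For every integer ℓ ≥ 3 and pairwise distinct complex numbers U_1, ..., U_ℓ, the sum over all cyclic permutations τ of {1, ..., ℓ} (i.e., permutations consisting of a single ℓ-cycle) of the product ∏_{i=1}^ℓ 1/(U_{τ(i)} - U_{τ(i+1)}) equals 0, where indices are taken cyclically (τ(ℓ+1) := τ(1)). -/
/-!
Fix `x` in the support `t`, `#t ≥ 3`. Deleting `x` from a cycle `τ` on `t` leaves a cycle `c` on
`t \ {x}` together with the predecessor `a = τ⁻¹ x`, and conversely `x` can be spliced into any
such `c` after any `a`; since `#t ≥ 3`, this is a bijection. Splicing multiplies the weight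
`∏ 1 / (U i - U (τ i))` by `f a - f (c a)`, where `f b = 1 / (U b - U x)` (partial fractions).
Summed over `a`, these factors telescope to zero because `c` permutes its support.
-/

open scoped Classical

open Equiv Finset Function

namespace Equiv.Perm

variable {α : Type*}

theorem SameCycle.of_forall_sameCycle_apply [Finite α] {f g : Perm α}
    (h : ∀ z, g.SameCycle z (f z)) {y z : α} (hyz : f.SameCycle y z) : g.SameCycle y z := by
  obtain ⟨k, -, rfl⟩ := hyz.exists_pow_eq'
  clear hyz
  induction k with
  | zero => exact .rfl
  | succ k ih => rw [pow_succ', mul_apply]; exact ih.trans (h _)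

section insertAfter

variable [DecidableEq α] {c : Perm α} {x a z : α}

/-- When `c x = x`, this splices `x` into the cycle of `c` between `a` and `c a`. -/
def insertAfter (c : Perm α) (x a : α) : Perm α := swap x (c a) * c

theorem insertAfter_apply_self (hx : c x = x) : c.insertAfter x a x = c a := by
  simp [insertAfter, hx]

theorem insertAfter_apply_left : c.insertAfter x a a = x := by
  simp [insertAfter]

theorem insertAfter_apply_of_ne (hx : c x = x) (hzx : z ≠ x) (hza : z ≠ a) :
    c.insertAfter x a z = c z :=
  swap_apply_of_ne_of_ne (fun h => hzx (c.injective (h.trans hx.symm)))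
    (c.injective.ne hza)

theorem insertAfter_inv_apply_self : (c.insertAfter x a)⁻¹ x = a := by
  rw [inv_eq_iff_eq, insertAfter_apply_left]

theorem swap_mul_insertAfter (hx : c x = x) :
    swap x (c.insertAfter x a x) * c.insertAfter x a = c := by
  rw [insertAfter_apply_self hx, insertAfter, swap_mul_self_mul]

theorem insertAfter_swap_mul (τ : Perm α) (x : α) :
    (swap x (τ x) * τ).insertAfter x (τ⁻¹ x) = τ := by
  simp [insertAfter, swap_mul_self_mul]

variable [Fintype α]

theorem apply_ne_of_apply_eq_self_of_mem_support (hx : c x = x) (ha : a ∈ c.support) :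
    c a ≠ x :=
  fun h => mem_support.mp ha (c.injective (h.trans hx.symm) ▸ hx)

theorem support_insertAfter (hx : c x = x) (ha : a ∈ c.support) :
    (c.insertAfter x a).support = insert x c.support := by
  have hca := apply_ne_of_apply_eq_self_of_mem_support hx ha
  ext z
  rw [mem_insert, mem_support, mem_support]
  by_cases hzx : z = x
  · simpa [hzx, insertAfter_apply_self hx] using hca
  by_cases hza : z = a
  · subst hza
    exact iff_of_true (by rw [insertAfter_apply_left]; exact Ne.symm hzx)
      (Or.inr (mem_support.mp ha))
  simp [insertAfter_apply_of_ne hx hzx hza, hzx]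

theorem IsCycle.insertAfter (hc : c.IsCycle) (hx : c x = x) (ha : a ∈ c.support) :
    (c.insertAfter x a).IsCycle := by
  set τ := c.insertAfter x a
  have hstep : ∀ z, τ.SameCycle z (c z) := by
    intro z
    by_cases hza : z = a
    · subst hza
      have h2 : τ (τ z) = c z := by rw [insertAfter_apply_left, insertAfter_apply_self hx]
      exact h2 ▸ sameCycle_apply_right.2 (sameCycle_apply_right.2 .rfl)
    by_cases hzx : z = x
    · rw [hzx, hx]
    · exact insertAfter_apply_of_ne hx hzx hza ▸ sameCycle_apply_right.2 .rfl
  have hτx : τ x = c a := insertAfter_apply_self hx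
  refine ⟨x, hτx ▸ apply_ne_of_apply_eq_self_of_mem_support hx ha, fun y hy => ?_⟩
  by_cases hyx : y = x
  · rw [hyx]
  have hy : c y ≠ y := by
    have hy' : y ∈ insert x c.support := support_insertAfter hx ha ▸ mem_support.mpr hy
    exact mem_support.mp ((mem_insert.mp hy').resolve_left hyx)
  have hca : c (c a) ≠ c a := mem_support.mp (apply_mem_support.mpr ha)
  exact (hτx ▸ sameCycle_apply_right.2 .rfl).trans
    ((hc.sameCycle hca hy).of_forall_sameCycle_apply hstep)

theorem IsCycle.apply_apply_ne_self {τ : Perm α} (hτ : τ.IsCycle) (h3 : 3 ≤ #τ.support)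
    (hx : τ x ≠ x) : τ (τ x) ≠ x := by
  intro h
  rw [hτ.eq_swap_of_apply_apply_eq_self hx h, card_support_swap hx.symm] at h3
  omega

noncomputable def cyclesOn (t : Finset α) : Finset (Perm α) :=
  {σ | σ.IsCycle ∧ σ.support = t}

theorem mem_cyclesOn {t : Finset α} {σ : Perm α} :
    σ ∈ cyclesOn t ↔ σ.IsCycle ∧ σ.support = t := by
  simp [cyclesOn]

theorem sum_cyclesOn_eq_sum_insertAfter {M : Type*} [AddCommMonoid M] (g : Perm α → M)
    {t : Finset α} (ht : 3 ≤ #t) (hx : x ∈ t) :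
    ∑ τ ∈ cyclesOn t, g τ =
      ∑ c ∈ cyclesOn (t.erase x), ∑ a ∈ t.erase x, g (c.insertAfter x a) := by
  rw [← sum_product']
  refine sum_nbij' (fun τ => (swap x (τ x) * τ, τ⁻¹ x)) (fun p => p.1.insertAfter x p.2)
    ?_ ?_ (fun τ _ => insertAfter_swap_mul τ x) ?_ (fun τ _ => by rw [insertAfter_swap_mul])
  · intro τ hτ
    obtain ⟨hτ, hτt⟩ := mem_cyclesOn.mp hτ
    have hτx : τ x ≠ x := mem_support.mp (hτt ▸ hx)
    have hττx := hτ.apply_apply_ne_self (hτt ▸ ht) hτx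
    refine mem_product.mpr ⟨mem_cyclesOn.mpr ⟨hτ.swap_mul hτx hττx, ?_⟩, ?_⟩
    · rw [support_swap_mul_eq τ x hττx, hτt, sdiff_singleton_eq_erase]
    · refine mem_erase.mpr ⟨fun h => hτx (inv_eq_iff_eq.mp h).symm, ?_⟩
      rw [← hτt, ← support_inv, apply_mem_support, support_inv, hτt]
      exact hx
  · rintro ⟨c, a⟩ hp
    obtain ⟨hc, ha⟩ := mem_product.mp hp
    obtain ⟨hc, hct⟩ := mem_cyclesOn.mp hc
    have hcx : c x = x := notMem_support.mp (hct ▸ notMem_erase x t)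
    rw [← hct] at ha
    refine mem_cyclesOn.mpr ⟨hc.insertAfter hcx ha, ?_⟩
    rw [support_insertAfter hcx ha, hct, insert_erase hx]
  · rintro ⟨c, a⟩ hp
    have hct := (mem_cyclesOn.mp (mem_product.mp hp).1).2
    have hcx : c x = x := notMem_support.mp (hct ▸ notMem_erase x t)
    exact Prod.ext (swap_mul_insertAfter hcx) insertAfter_inv_apply_self

end insertAfter

section cycleWeight

variable [DecidableEq α] [Fintype α] {K : Type*} [Field K] {U : α → K}

def cycleWeight (U : α → K) (σ : Perm α) : K := ∏ i ∈ σ.support, (U i - U (σ i))⁻¹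

theorem cycleWeight_insertAfter (hU : Injective U) {c : Perm α} {x a : α} (hx : c x = x)
    (ha : a ∈ c.support) :
    cycleWeight U (c.insertAfter x a) =
      cycleWeight U c * ((U a - U x)⁻¹ - (U (c a) - U x)⁻¹) := by
  have hxs : x ∉ c.support := notMem_support.mpr hx
  set rest := ∏ i ∈ c.support.erase a, (U i - U (c i))⁻¹
  have hspliced :
      cycleWeight U (c.insertAfter x a) = (U x - U (c a))⁻¹ * ((U a - U x)⁻¹ * rest) := by
    rw [cycleWeight, support_insertAfter hx ha, prod_insert hxs, ← mul_prod_erase _ _ ha,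
      insertAfter_apply_self hx, insertAfter_apply_left]
    congr 2
    refine prod_congr rfl fun z hz => ?_
    have hza := ne_of_mem_erase hz
    have hzx : z ≠ x := fun h => hxs (h ▸ mem_of_mem_erase hz)
    rw [insertAfter_apply_of_ne hx hzx hza]
  have hc : cycleWeight U c = (U a - U (c a))⁻¹ * rest := (mul_prod_erase _ _ ha).symm
  have hax : U a - U x ≠ 0 := sub_ne_zero.mpr (hU.ne fun h => hxs (h ▸ ha))
  have hcax : U (c a) - U x ≠ 0 :=
    sub_ne_zero.mpr (hU.ne (apply_ne_of_apply_eq_self_of_mem_support hx ha))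
  have haca : U a - U (c a) ≠ 0 := sub_ne_zero.mpr (hU.ne (mem_support.mp ha).symm)
  rw [hspliced, hc, ← neg_sub (U (c a)), inv_neg]
  field_simp
  ring

theorem sum_cycleWeight_cyclesOn_eq_zero (hU : Injective U) {t : Finset α} (ht : 3 ≤ #t) :
    ∑ τ ∈ cyclesOn t, cycleWeight U τ = 0 := by
  obtain ⟨x, hx⟩ : t.Nonempty := card_pos.mp (by omega)
  rw [sum_cyclesOn_eq_sum_insertAfter _ ht hx]
  refine sum_eq_zero fun c hc => ?_
  have hct := (mem_cyclesOn.mp hc).2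
  have hcx : c x = x := notMem_support.mp (hct ▸ notMem_erase x t)
  set f : α → K := fun b => (U b - U x)⁻¹
  calc ∑ a ∈ t.erase x, cycleWeight U (c.insertAfter x a)
      = cycleWeight U c * ∑ a ∈ t.erase x, (f a - f (c a)) := by
        rw [mul_sum]
        exact sum_congr rfl fun a ha => cycleWeight_insertAfter hU hcx (hct ▸ ha)
    _ = 0 := by
        rw [sum_sub_distrib, c.sum_comp _ f fun a ha => hct ▸ mem_support.mpr ha, sub_self,
          mul_zero]

end cycleWeight

end Equiv.Perm

/-- Kenyon's cycle lemma: for `ℓ ≥ 3` and pairwise distinct complex numbers `U`, the sum over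
all permutations consisting of a single `ℓ`-cycle of the cyclic product
`∏ᵢ 1/(U_{τ(i)} - U_{τ(i+1)})` (taken along the cycle of `τ`, i.e. `∏ᵢ 1/(Uᵢ - U_{τ(i)})`)
vanishes. -/
theorem stmt7 (n : ℕ) (U : Fin (n + 3) → ℂ) (hU : Function.Injective U) :
    (∑ τ ∈ Finset.univ.filter
        (fun τ : Equiv.Perm (Fin (n + 3)) => τ.IsCycle ∧ τ.support = Finset.univ),
      ∏ i : Fin (n + 3), 1 / (U i - U (τ i))) = 0 := by
  refine (sum_congr rfl fun τ hτ => ?_).trans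
    (Perm.sum_cycleWeight_cyclesOn_eq_zero hU (t := univ) (by simp))
  rw [Perm.cycleWeight, (mem_filter.mp hτ).2.2]
  simp only [one_div]
end

section
/- Define the action S(w; χ, η) = (w - χ) Log(w - χ) - (w - χ + 1 - η) Log(w - χ + 1 - η) + (1 - η) log(1 - η) + ∑_{i=1}^k [(b_i - w) Log(b_i - w) - (a_i - w) Log(a_i - w)], for w in the open upper half plane, real parameters a_1 < b_1 < ... < a_k < b_k with ∑(b_i - a_i) = 1, and real χ, η with 0 < η < 1. Then a point w ∈ ℍ satisfies ∂S/∂w (w; χ, η) = 0 if and only if (w - χ) ∏_{i=1}^k (w - a_i) = (w - χ + 1 - η) ∏_{i=1}^k (w - b_i). -/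
/-!
Termwise, `∂S/∂w = L - R` with `L = Log(w-χ) + ∑ Log(aᵢ-w)` and `R = Log(w-χ+1-η) + ∑ Log(bᵢ-w)`,
and `exp L`, `exp R` are the two sides of the polynomial identity up to the common sign `(-1)^k`.
So the identity says `L - R ∈ 2πiℤ`, and it remains to show `|Im(L - R)| < π`. On the horizontal
line through `w`, `arg(x - w)` and `arg(w - x)` are `arctan((x - Re w)/Im w) ∓ π/2`, increasing in
`x` with oscillation less than `π`. Hence `Im(L - R)` is the increment over `[χ-1+η, χ]`, which lies
in `(0, π)`, minus the sum of the increments over the ordered disjoint intervals `[aᵢ, bᵢ]`, which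
lies in `[0, π)`.
-/

open Complex Real Finset

theorem Complex.arg_eq_pi_div_two_sub_arctan {z : ℂ} (hz : 0 < z.im) :
    arg z = π / 2 - Real.arctan (z.re / z.im) := by
  have hnorm : √(1 + (z.re / z.im) ^ 2) = ‖z‖ / z.im := by
    rw [← Real.sqrt_sq (div_pos (norm_pos_iff.2 (fun h => hz.ne' (by simp [h]))) hz).le]
    congr 1
    rw [div_pow, div_pow, Complex.sq_norm, normSq_apply]
    field_simp
    ring
  rw [arg_of_im_pos hz, arccos_eq_pi_div_two_sub_arcsin, Real.arctan_eq_arcsin, hnorm]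
  congr 2
  field_simp

theorem Complex.arg_eq_neg_pi_div_two_sub_arctan {z : ℂ} (hz : z.im < 0) :
    arg z = -(π / 2) - Real.arctan (z.re / z.im) := by
  have h := arg_neg_eq_arg_add_pi_of_im_neg hz
  rw [arg_eq_pi_div_two_sub_arctan (by simpa using hz), neg_re, neg_im, neg_div_neg_eq] at h
  linarith

theorem Complex.eq_of_exp_eq_of_abs_im_sub_lt {z w : ℂ} (h : exp z = exp w)
    (him : |(z - w).im| < 2 * π) : z = w := by
  obtain ⟨n, hn⟩ := exp_eq_exp_iff_exists_int.1 h
  have hdiff : (z - w).im = n * (2 * π) := by simp [hn]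
  have hn0 : n = 0 := by
    rw [hdiff, abs_mul, abs_of_pos (by positivity : (0 : ℝ) < 2 * π)] at him
    have : |(n : ℝ)| < 1 := (mul_lt_iff_lt_one_left (by positivity)).1 him
    exact Int.abs_lt_one_iff.1 (by exact_mod_cast this)
  simpa [hn0] using hn

theorem HasDerivAt.mul_log_self {f : ℂ → ℂ} {f' x : ℂ} (hf : HasDerivAt f f' x)
    (hx : f x ∈ slitPlane) :
    HasDerivAt (fun t => f t * Complex.log (f t)) (f' * (Complex.log (f x) + 1)) x :=
  (hf.mul (hf.clog hx)).congr_deriv <| by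
    rw [mul_div_assoc', mul_div_right_comm, div_self (slitPlane_ne_zero hx)]
    ring

theorem Monotone.sum_sub_le_sub {α β : Type*} [Preorder α] [AddCommGroup β] [PartialOrder β]
    [IsOrderedAddMonoid β] {f : α → β} (hf : Monotone f) {n : ℕ} {a b : Fin (n + 1) → α}
    (hab : ∀ i, a i ≤ b i) (hba : ∀ i j, i < j → b i ≤ a j) :
    ∑ i, (f (b i) - f (a i)) ≤ f (b (Fin.last n)) - f (a 0) := by
  induction n with
  | zero => simp
  | succ n ih =>
    have hinit := ih (a := a ∘ Fin.castSucc) (b := b ∘ Fin.castSucc) (fun i => hab _)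
      fun i j hij => hba _ _ (Fin.castSucc_lt_castSucc_iff.2 hij)
    have hgap := hf (hba _ _ (Fin.castSucc_lt_last (Fin.last n)))
    simp only [Function.comp_apply, Fin.castSucc_zero] at hinit
    rw [Fin.sum_univ_castSucc]
    calc _ ≤ f (b (Fin.last n).castSucc) - f (a 0) + (f (b (Fin.last _)) - f (a (Fin.last _))) :=
          add_le_add_left hinit _
      _ ≤ f (a (Fin.last _)) - f (a 0) + (f (b (Fin.last _)) - f (a (Fin.last _))) := by
          gcongr
      _ = _ := by abel

theorem Monotone.sum_sub_lt_of_forall_sub_lt {α β : Type*} [Preorder α] [Nonempty α]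
    [AddCommGroup β] [PartialOrder β] [IsOrderedAddMonoid β] {f : α → β} (hf : Monotone f)
    {c : β} (hc : ∀ x y, f y - f x < c) {k : ℕ} {a b : Fin k → α}
    (hab : ∀ i, a i ≤ b i) (hba : ∀ i j, i < j → b i ≤ a j) :
    ∑ i, (f (b i) - f (a i)) < c := by
  cases k with
  | zero => simpa using hc (Classical.arbitrary α) (Classical.arbitrary α)
  | succ n => exact (hf.sum_sub_le_sub hab hba).trans_lt (hc _ _)

section UpperHalfPlane

variable {w : ℂ}

theorem Complex.arg_sub_ofReal (hw : 0 < w.im) (x : ℝ) :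
    arg (w - x) = π / 2 + Real.arctan ((x - w.re) / w.im) := by
  rw [arg_eq_pi_div_two_sub_arctan (by simpa using hw), sub_re, ofReal_re, sub_im, ofReal_im,
    sub_zero, ← neg_sub x, neg_div, Real.arctan_neg, sub_neg_eq_add]

theorem Complex.arg_ofReal_sub (hw : 0 < w.im) (x : ℝ) :
    arg (x - w) = Real.arctan ((x - w.re) / w.im) - π / 2 := by
  rw [arg_eq_neg_pi_div_two_sub_arctan (by simpa using hw), sub_re, ofReal_re, sub_im, ofReal_im,
    zero_sub, div_neg, Real.arctan_neg]
  ring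

theorem strictMono_arctan_sub_re_div_im (hw : 0 < w.im) :
    StrictMono fun x : ℝ => Real.arctan ((x - w.re) / w.im) :=
  Real.arctan_strictMono.comp fun _ _ h => div_lt_div_of_pos_right (sub_lt_sub_right h _) hw

end UpperHalfPlane

section Action

variable {k : ℕ}

noncomputable def action (χ η : ℝ) (a b : Fin k → ℝ) (u : ℂ) : ℂ :=
  (u - (χ : ℂ)) * Complex.log (u - (χ : ℂ)) -
    (u - (χ : ℂ) + 1 - (η : ℂ)) * Complex.log (u - (χ : ℂ) + 1 - (η : ℂ)) +
    (((1 - η) * Real.log (1 - η) : ℝ) : ℂ) +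
    ∑ i, (((b i : ℂ) - u) * Complex.log ((b i : ℂ) - u) -
      ((a i : ℂ) - u) * Complex.log ((a i : ℂ) - u))

noncomputable def logPotential (c : ℝ) (p : Fin k → ℝ) (w : ℂ) : ℂ :=
  log (w - c) + ∑ i, log (p i - w)

variable {w : ℂ}

theorem hasDerivAt_action (χ η : ℝ) (a b : Fin k → ℝ) (hw : w.im ≠ 0) :
    HasDerivAt (action χ η a b) (logPotential χ a w - logPotential (χ - 1 + η) b w) w := by
  have hslit : ∀ z : ℂ, z.im = w.im ∨ z.im = -w.im → z ∈ slitPlane := fun z hz =>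
    mem_slitPlane_iff.2 <| Or.inr <| by rcases hz with hz | hz <;> simpa [hz] using hw
  have hleft : ∀ c : ℂ, c.im = 0 → HasDerivAt (fun u => (u - c) * log (u - c))
      (log (w - c) + 1) w := fun c hc => by
    simpa using ((hasDerivAt_id w).sub_const c).mul_log_self (hslit _ (Or.inl (by simp [hc])))
  have hright : ∀ c : ℝ, HasDerivAt (fun u => ((c : ℂ) - u) * log ((c : ℂ) - u))
      (-(log ((c : ℂ) - w) + 1)) w := fun c => by
    simpa using ((hasDerivAt_id w).const_sub (c : ℂ)).mul_log_self (hslit _ (Or.inr (by simp)))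
  have h := (((hleft χ (by simp)).sub (hleft ((χ - 1 + η : ℝ) : ℂ) (by simp))).add_const
    (((1 - η) * Real.log (1 - η) : ℝ) : ℂ)).add
    (HasDerivAt.fun_sum (u := univ) fun i _ => (hright (b i)).sub (hright (a i)))
  have hshift : ∀ u : ℂ, u - ((χ - 1 + η : ℝ) : ℂ) = u - χ + 1 - η := fun u => by push_cast; ring
  simp only [hshift] at h
  refine h.congr_deriv ?_
  simp only [logPotential, hshift, sum_sub_distrib, sum_neg_distrib, sum_add_distrib]
  ring

theorem exp_logPotential (c : ℝ) (p : Fin k → ℝ) (hw : w.im ≠ 0) :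
    exp (logPotential c p w) = (w - c) * ∏ i, ((p i : ℂ) - w) := by
  have hne : ∀ z : ℂ, z.im ≠ 0 → z ≠ 0 := fun z hz h => hz (by simp [h])
  rw [logPotential, Complex.exp_add, Complex.exp_sum, exp_log (hne _ (by simpa using hw))]
  exact congrArg _ (prod_congr rfl fun i _ => exp_log (hne _ (by simpa using hw)))

theorem im_logPotential (c : ℝ) (p : Fin k → ℝ) (hw : 0 < w.im) :
    (logPotential c p w).im = π / 2 + Real.arctan ((c - w.re) / w.im) +
      ∑ i, (Real.arctan ((p i - w.re) / w.im) - π / 2) := by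
  simp only [logPotential, add_im, im_sum, log_im, arg_sub_ofReal hw, arg_ofReal_sub hw]

theorem abs_im_logPotential_sub_lt_pi {χ η : ℝ} {a b : Fin k → ℝ} (hab : ∀ i, a i < b i)
    (hba : ∀ i j, i < j → b i < a j) (hη : η < 1) (hw : 0 < w.im) :
    |(logPotential χ a w - logPotential (χ - 1 + η) b w).im| < π := by
  set θ : ℝ → ℝ := fun x => Real.arctan ((x - w.re) / w.im) with hθ
  have hθ_mono : StrictMono θ := strictMono_arctan_sub_re_div_im hw
  have hθ_sub : ∀ x y, θ y - θ x < π := fun x y => by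
    linarith [Real.arctan_lt_pi_div_two ((y - w.re) / w.im),
      Real.neg_pi_div_two_lt_arctan ((x - w.re) / w.im)]
  have hsum_lt : ∑ i, (θ (b i) - θ (a i)) < π := hθ_mono.monotone.sum_sub_lt_of_forall_sub_lt
    hθ_sub (fun i => (hab i).le) fun i j hij => (hba i j hij).le
  have hsum_nonneg : 0 ≤ ∑ i, (θ (b i) - θ (a i)) :=
    sum_nonneg fun i _ => sub_nonneg.2 (hθ_mono (hab i)).le
  have hχ_pos : 0 < θ χ - θ (χ - 1 + η) := sub_pos.2 (hθ_mono (by linarith))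
  have him : (logPotential χ a w - logPotential (χ - 1 + η) b w).im =
      θ χ - θ (χ - 1 + η) - ∑ i, (θ (b i) - θ (a i)) := by
    rw [sub_im, im_logPotential _ _ hw, im_logPotential _ _ hw]
    simp only [hθ, sum_sub_distrib]
    ring
  rw [him, abs_lt]
  constructor <;> linarith [hθ_sub (χ - 1 + η) χ]

end Action

theorem stmt10_general (k : ℕ) (a b : Fin k → ℝ)
    (hab : ∀ i, a i < b i) (hba : ∀ i j : Fin k, i < j → b i < a j)
    (χ η : ℝ) (hη1 : η < 1)
    (w : ℂ) (hw : 0 < w.im) :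
    deriv (fun u : ℂ =>
        (u - (χ : ℂ)) * Complex.log (u - (χ : ℂ)) -
          (u - (χ : ℂ) + 1 - (η : ℂ)) * Complex.log (u - (χ : ℂ) + 1 - (η : ℂ)) +
          (((1 - η) * Real.log (1 - η) : ℝ) : ℂ) +
          ∑ i, (((b i : ℂ) - u) * Complex.log ((b i : ℂ) - u) -
            ((a i : ℂ) - u) * Complex.log ((a i : ℂ) - u))) w = 0 ↔
      (w - (χ : ℂ)) * ∏ i, (w - (a i : ℂ)) =
        (w - (χ : ℂ) + 1 - (η : ℂ)) * ∏ i, (w - (b i : ℂ)) := by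
  have hflip : ∀ p : Fin k → ℝ, ∏ i, (w - p i) = (-1) ^ k * ∏ i, ((p i : ℂ) - w) := fun p => by
    simp_rw [← neg_sub _ w, prod_neg, card_univ, Fintype.card_fin]
  have hshift : w - ((χ - 1 + η : ℝ) : ℂ) = w - χ + 1 - η := by push_cast; ring
  change deriv (action χ η a b) w = 0 ↔ _
  rw [(hasDerivAt_action χ η a b hw.ne').deriv, sub_eq_zero, hflip, hflip, mul_left_comm,
    mul_left_comm (w - χ + 1 - η), mul_right_inj' (pow_ne_zero _ (by norm_num)), ← hshift,
    ← exp_logPotential _ _ hw.ne', ← exp_logPotential _ _ hw.ne']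
  refine ⟨congrArg Complex.exp, fun h => eq_of_exp_eq_of_abs_im_sub_lt h ?_⟩
  linarith [abs_im_logPotential_sub_lt_pi (χ := χ) hab hba hη1 hw, pi_pos]

/-- A point `w` in the open upper half plane is a critical point of the action
`S(w;χ,η) = (w-χ)Log(w-χ) - (w-χ+1-η)Log(w-χ+1-η) + (1-η)log(1-η)
            + ∑ᵢ [(bᵢ-w)Log(bᵢ-w) - (aᵢ-w)Log(aᵢ-w)]`
if and only if `(w-χ)∏ᵢ(w-aᵢ) = (w-χ+1-η)∏ᵢ(w-bᵢ)`. -/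
theorem stmt10 (k : ℕ) (hk : 0 < k) (a b : Fin k → ℝ)
    (hab : ∀ i, a i < b i) (hba : ∀ i j : Fin k, i < j → b i < a j)
    (hsum : ∑ i, (b i - a i) = 1)
    (χ η : ℝ) (hη0 : 0 < η) (hη1 : η < 1)
    (w : ℂ) (hw : 0 < w.im) :
    deriv (fun u : ℂ =>
        (u - (χ : ℂ)) * Complex.log (u - (χ : ℂ)) -
          (u - (χ : ℂ) + 1 - (η : ℂ)) * Complex.log (u - (χ : ℂ) + 1 - (η : ℂ)) +
          (((1 - η) * Real.log (1 - η) : ℝ) : ℂ) +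
          ∑ i, (((b i : ℂ) - u) * Complex.log ((b i : ℂ) - u) -
            ((a i : ℂ) - u) * Complex.log ((a i : ℂ) - u))) w = 0 ↔
      (w - (χ : ℂ)) * ∏ i, (w - (a i : ℂ)) =
        (w - (χ : ℂ) + 1 - (η : ℂ)) * ∏ i, (w - (b i : ℂ)) :=
  stmt10_general k a b hab hba χ η hη1 w hw
end

section
/- Suppose the function w(χ, η) with values in the upper half plane satisfies identically the algebraic equation (w - χ) ∏_{i=1}^k (w - a_i) = (w - χ + 1 - η) ∏_{i=1}^k (w - b_i) on an open set where it is continuously differentiable, with 0 < η < 1. Then its partial derivatives w_χ and w_η cannot both vanish at any point; in fact they satisfy the complex Burgers equation ((w - χ)/(1 - η)) · w_χ = -w_η, so if w_χ = 0 then w_η = 0 forces w = χ, contradicting Im w > 0. -/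
open Complex

/-!
Write the algebraic equation as `F(w, χ, η) = 0` with
`F(z, χ, η) = (z - χ) f(z) - (z - χ + 1 - η) g(z)`, `f = ∏ᵢ (z - aᵢ)`, `g = ∏ᵢ (z - bᵢ)`.
Differentiating `F(w(χ,η), χ, η) = 0` gives `Q w_χ = f(w) - g(w)` and `Q w_η = -g(w)`, where
`Q = ∂F/∂z` at `w`. Since `w` lies off the real axis, `g(w) ≠ 0`; hence `Q ≠ 0` and `w_η ≠ 0`, and
combining the two identities with `F = 0` gives `Q · ((w - χ) w_χ + (1 - η) w_η) = 0`.
-/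

theorem prod_sub_ofReal_ne_zero {ι : Type*} (s : Finset ι) (b : ι → ℝ) {z : ℂ} (hz : z.im ≠ 0) :
    ∏ i ∈ s, (z - (b i : ℂ)) ≠ 0 :=
  Finset.prod_ne_zero_iff.mpr fun i _ h => hz <| by
    simpa using congrArg Complex.im (sub_eq_zero.mp h)

theorem implicit_fderiv_of_algebraic_eq {f g : ℂ → ℂ} {w : ℝ × ℝ → ℂ} {D : Set (ℝ × ℝ)} {p : ℝ × ℝ}
    (hD : D ∈ nhds p) (hw : DifferentiableAt ℝ w p)
    (hf : DifferentiableAt ℂ f (w p)) (hg : DifferentiableAt ℂ g (w p))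
    (heq : ∀ q ∈ D, (w q - q.1) * f (w q) = (w q - q.1 + 1 - q.2) * g (w q)) (v : ℝ × ℝ) :
    (f (w p) + (w p - p.1) * deriv f (w p) - g (w p)
        - (w p - p.1 + 1 - p.2) * deriv g (w p)) * fderiv ℝ w p v =
      v.1 * (f (w p) - g (w p)) - v.2 * g (w p) := by
  set L := fderiv ℝ w p
  have hL : HasFDerivAt w L p := hw.hasFDerivAt
  have hfst : HasFDerivAt (fun q : ℝ × ℝ => (q.1 : ℂ))
      (ofRealCLM.comp (ContinuousLinearMap.fst ℝ ℝ ℝ)) p :=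
    (ofRealCLM.comp (ContinuousLinearMap.fst ℝ ℝ ℝ)).hasFDerivAt
  have hsnd : HasFDerivAt (fun q : ℝ × ℝ => (q.2 : ℂ))
      (ofRealCLM.comp (ContinuousLinearMap.snd ℝ ℝ ℝ)) p :=
    (ofRealCLM.comp (ContinuousLinearMap.snd ℝ ℝ ℝ)).hasFDerivAt
  have hΦ := ((hL.sub hfst).mul (hf.hasDerivAt.comp_hasFDerivAt p hL)).sub
    ((((hL.sub hfst).add_const 1).sub hsnd).mul (hg.hasDerivAt.comp_hasFDerivAt p hL))
  have hΦ0 : (fun _ => (0 : ℂ)) =ᶠ[nhds p] fun q =>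
      (w q - q.1) * (f ∘ w) q - ((w q - q.1 + 1) - q.2) * (g ∘ w) q := by
    filter_upwards [hD] with q hq
    simp [heq q hq]
  have h := congrArg (· v) ((hΦ.congr_of_eventuallyEq hΦ0).unique (hasFDerivAt_const 0 p))
  simp only [Pi.sub_apply, Function.comp_apply, sub_apply, add_apply, smul_apply, smul_eq_mul,
    ContinuousLinearMap.comp_apply, ContinuousLinearMap.coe_fst', ofRealCLM_apply,
    ContinuousLinearMap.coe_snd', zero_apply] at h
  linear_combination h

theorem burgers_of_implicit_derivs {K : Type*} [Field K] {Q z s F G u v : K}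
    (hu : Q * u = F - G) (hv : Q * v = -G) (hF : z * F = (z + s) * G)
    (hG : G ≠ 0) (hs : s ≠ 0) :
    z / s * u = -v ∧ v ≠ 0 := by
  have hQ : Q ≠ 0 := by
    rintro rfl
    exact hG (by linear_combination hv)
  refine ⟨?_, fun hv0 => hG (by linear_combination hv - Q * hv0)⟩
  have hburgers : Q * (z * u + s * v) = 0 := by linear_combination z * hu + s * hv + hF
  rw [div_mul_eq_mul_div, div_eq_iff hs]
  linear_combination (mul_eq_zero.mp hburgers).resolve_left hQ

theorem stmt12_general (k : ℕ) (a b : Fin k → ℝ)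
    (D : Set (ℝ × ℝ)) (hD : IsOpen D)
    (w : ℝ × ℝ → ℂ) (hC1 : ContDiffOn ℝ 1 w D)
    (him : ∀ p ∈ D, 0 < (w p).im)
    (hη : ∀ p ∈ D, 0 < p.2 ∧ p.2 < 1)
    (halg : ∀ p ∈ D, (w p - (p.1 : ℂ)) * ∏ i, (w p - (a i : ℂ)) =
      (w p - (p.1 : ℂ) + 1 - (p.2 : ℂ)) * ∏ i, (w p - (b i : ℂ))) :
    ∀ p ∈ D,
      ((w p - (p.1 : ℂ)) / (1 - (p.2 : ℂ))) * fderiv ℝ w p (1, 0) =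
        -(fderiv ℝ w p (0, 1)) ∧
      ¬(fderiv ℝ w p (1, 0) = 0 ∧ fderiv ℝ w p (0, 1) = 0) := by
  intro p hp
  have hDp : D ∈ nhds p := hD.mem_nhds hp
  have hw : DifferentiableAt ℝ w p := (hC1.contDiffAt hDp).differentiableAt one_ne_zero
  have hprod (c : Fin k → ℝ) : DifferentiableAt ℂ (fun z => ∏ i, (z - (c i : ℂ))) (w p) := by
    fun_prop
  have hderiv := implicit_fderiv_of_algebraic_eq hDp hw (hprod a) (hprod b) halg
  have hs : (1 : ℂ) - p.2 ≠ 0 := by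
    rw [← ofReal_one, ← ofReal_sub, ofReal_ne_zero]
    linarith [(hη p hp).2]
  have h10 := hderiv (1, 0)
  have h01 := hderiv (0, 1)
  simp only [ofReal_one, ofReal_zero, one_mul, zero_mul, zero_sub, sub_zero] at h10 h01
  obtain ⟨hburgers, hwη_ne⟩ := burgers_of_implicit_derivs (z := w p - p.1) (s := 1 - p.2) h10 h01
    (by linear_combination halg p hp) (prod_sub_ofReal_ne_zero _ b (him p hp).ne') hs
  exact ⟨hburgers, fun h => hwη_ne h.2⟩

/-- If `w(χ,η)`, taking values in the open upper half plane, is `C¹` on an open set where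
`0 < η < 1` and satisfies the algebraic equation
`(w-χ)∏ᵢ(w-aᵢ) = (w-χ+1-η)∏ᵢ(w-bᵢ)` identically, then `w` satisfies the complex Burgers
equation `((w-χ)/(1-η))·w__χ = -w_η`, and its partial derivatives cannot both vanish. -/
theorem stmt12 (k : ℕ) (hk : 0 < k) (a b : Fin k → ℝ)
    (hab : ∀ i, a i < b i) (hba : ∀ i j : Fin k, i < j → b i < a j)
    (hsum : ∑ i, (b i - a i) = 1)
    (D : Set (ℝ × ℝ)) (hD : IsOpen D)
    (w : ℝ × ℝ → ℂ) (hC1 : ContDiffOn ℝ 1 w D)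
    (him : ∀ p ∈ D, 0 < (w p).im)
    (hη : ∀ p ∈ D, 0 < p.2 ∧ p.2 < 1)
    (halg : ∀ p ∈ D, (w p - (p.1 : ℂ)) * ∏ i, (w p - (a i : ℂ)) =
      (w p - (p.1 : ℂ) + 1 - (p.2 : ℂ)) * ∏ i, (w p - (b i : ℂ))) :
    ∀ p ∈ D,
      ((w p - (p.1 : ℂ)) / (1 - (p.2 : ℂ))) * fderiv ℝ w p (1, 0) =
        -(fderiv ℝ w p (0, 1)) ∧
      ¬(fderiv ℝ w p (1, 0) = 0 ∧ fderiv ℝ w p (0, 1) = 0) :=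
  stmt12_general k a b D hD w hC1 him hη halg
end
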